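/- arXiv:1908.02539 — 2 statements merged into one kernel-verified Lean document; each statement's English description precedes it below -/
import Mathlib

section
/- There is no sequence of sets f : ℕ → ZFSet and values b : ℕ → ZFSet such that for every n, the Kuratowski pair (f(n+1), b(n)) is a member of f(n); i.e., there is no infinite chain of function graphs each contained in the domain of its predecessor. -/
/-! Since `x ∈ {x} ∈ (x, y)`, the hypothesis makes each `f (n + 1)` an element of an element of
`f n`, so `f` descends along the transitive closure of `∈`, which is well founded because `∈` is. -/

open Relation

theorem ZFSet.transGen_mem_pair_left (x y : ZFSet) : TransGen (· ∈ ·) x (pair x y) :=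
  .tail (.single (mem_singleton.2 rfl)) (mem_insert _ _)

instance ZFSet.isWellFounded_transGen_mem : IsWellFounded ZFSet (TransGen (· ∈ ·)) :=
  ⟨mem_wf.transGen⟩

theorem no_descending_graph_chain :
    ¬ ∃ (f b : ℕ → ZFSet), ∀ n : ℕ, ZFSet.pair (f (n + 1)) (b n) ∈ f n := by
  rintro ⟨f, b, h⟩
  obtain ⟨n, hn⟩ := WellFounded.not_rel_apply_succ (r := TransGen (· ∈ ·)) f
  exact hn ((ZFSet.transGen_mem_pair_left _ _).tail (h n))
end

section
/- If every element x of a set A has the form {({y},{y,v})}, i.e. x is the singleton of the Kuratowski pair (y, v) = {{y},{y,v}}, with y ∈ A and v ∈ {0, 1}, then A = ∅. -/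
theorem type_P_set_empty (A : ZFSet)
    (h : ∀ x ∈ A, ∃ y v : ZFSet, y ∈ A ∧ v ∈ ({∅, {∅}} : ZFSet) ∧
      x = ({ZFSet.pair y v} : ZFSet)) : A = ∅ := by
  by_contra hne
  obtain ⟨x, hx⟩ := (ZFSet.nonempty_def A).1 ((A.eq_empty_or_nonempty).resolve_left hne)
  obtain ⟨x, hx, hmin⟩ := (wellFounded_lt (α := Ordinal)).has_min
    (Set.range fun z : {z // z ∈ A} => ZFSet.rank z.1) ⟨_, ⟨⟨x, hx⟩, rfl⟩⟩
  obtain ⟨⟨z, hz⟩, rfl⟩ := hx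
  obtain ⟨y, v, hy, hv, hzeq⟩ := h z hz
  have h1 : ZFSet.rank y < ZFSet.rank z := by
    have h2 : y ∈ ({y} : ZFSet) := ZFSet.mem_singleton.2 rfl
    have h3 : ({y} : ZFSet) ∈ ZFSet.pair y v := by
      simp [ZFSet.pair]
    have h4 : ZFSet.pair y v ∈ z := by
      rw [hzeq]; exact ZFSet.mem_singleton.2 rfl
    exact (ZFSet.rank_lt_of_mem h2).trans
      ((ZFSet.rank_lt_of_mem h3).trans (ZFSet.rank_lt_of_mem h4))
  exact hmin _ ⟨⟨y, hy⟩, rfl⟩ h1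
end
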